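/- There exists a finite constant C (depending only on m and r̃_1,…,r̃_m) such that for all integers k with |k| ≤ m, all v ∈ [0,1], all 0 ≤ t < t' < ∞, and all x ∈ ℤ: |∇_k p_{t'}(x) − ∇_k p_t(x)| ≤ C · min(1, t^{−1−v}) · (t'−t)^v, where ∇_k f(x) := f(x+k) − f(x). -/

import Mathlib

/-!
In Fourier variables, `∇_k p_{t'}(x) - ∇_k p_t(x)` is `(2π)⁻¹` times the real part of
`∫ e^{-ixθ} (e^{-ikθ} - 1) (e^{-t'φ(θ)} - e^{-tφ(θ)}) dθ`, and `1 - e^{-w} ≤ w^v` bounds the time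
increment by `e^{-tφ} (t' - t)^v φ^v`. For small `t` everything else is bounded by constants. For
large `t` we use `|e^{-ikθ} - 1| ≤ |k| |θ|`, `φ^v e^{-tφ} ≤ 2 t^{-v} e^{-tφ/2}` and
`φ(θ) ≥ (2 r̃₁ / π²) θ²` on `[-π, π]`, so the integral is at most a multiple of
`t^{-v} ∫ |θ| e^{-c t θ²} dθ ≤ t^{-v} / (c t)`.
-/

open Finset

/-- `φ(θ) := Σ_{k=1}^m r̃_k (1 − cos(kθ))`. -/
noncomputable def phiFn (m : ℕ) (r : ℕ → ℝ) (θ : ℝ) : ℝ :=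
  ∑ k ∈ Finset.Icc 1 m, r k * (1 - Real.cos (k * θ))

/-- The semi-discrete heat kernel
`p_t(x) := (2π)⁻¹ ∫_{−π}^{π} e^{−ixθ} e^{−tφ(θ)} dθ`, a real number since `φ` is even. -/
noncomputable def hk (m : ℕ) (r : ℕ → ℝ) (t : ℝ) (x : ℤ) : ℝ :=
  ((2 * (Real.pi : ℂ))⁻¹ * ∫ θ in (-Real.pi)..Real.pi,
      Complex.exp (-(x : ℂ) * Complex.I * (θ : ℂ)) *
        Complex.exp (-(t : ℂ) * ((phiFn m r θ : ℝ) : ℂ))).re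

open Real MeasureTheory
open scoped Complex
open Complex (I)

lemma one_sub_exp_neg_le_rpow {w v : ℝ} (hw : 0 ≤ w) (hv0 : 0 ≤ v) (hv1 : v ≤ 1) :
    1 - exp (-w) ≤ w ^ v := by
  rcases le_total w 1 with hw1 | hw1
  · calc 1 - exp (-w) ≤ w := by linarith [add_one_le_exp (-w)]
      _ ≤ w ^ v := self_le_rpow_of_le_one hw hw1 hv1
  · calc 1 - exp (-w) ≤ 1 := by linarith [exp_nonneg (-w)]
      _ ≤ w ^ v := one_le_rpow hw1 hv0

lemma abs_exp_neg_mul_sub_exp_neg_mul_le {t t' u v : ℝ} (htt' : t ≤ t') (hu : 0 ≤ u)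
    (hv0 : 0 ≤ v) (hv1 : v ≤ 1) :
    |exp (-(t' * u)) - exp (-(t * u))| ≤ exp (-(t * u)) * ((t' - t) ^ v * u ^ v) := by
  have hδu : 0 ≤ (t' - t) * u := mul_nonneg (sub_nonneg.2 htt') hu
  have hsplit : exp (-(t' * u)) = exp (-(t * u)) * exp (-((t' - t) * u)) := by
    rw [← exp_add]; ring_nf
  rw [hsplit, abs_sub_comm, ← mul_one_sub, abs_mul, abs_of_pos (exp_pos _),
    abs_of_nonneg (by linarith [exp_le_one_iff.2 (neg_nonpos.2 hδu)]),
    ← mul_rpow (sub_nonneg.2 htt') hu]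
  exact mul_le_mul_of_nonneg_left (one_sub_exp_neg_le_rpow hδu hv0 hv1) (exp_nonneg _)

lemma rpow_le_one_add {w v : ℝ} (hw : 0 ≤ w) (hv0 : 0 ≤ v) (hv1 : v ≤ 1) : w ^ v ≤ 1 + w := by
  rcases le_total w 1 with hw1 | hw1
  · linarith [rpow_le_one hw hw1 hv0]
  · linarith [rpow_le_self_of_one_le hw1 hv1]

lemma one_add_mul_exp_neg_le (w : ℝ) : (1 + w) * exp (-w) ≤ 2 * exp (-(w / 2)) := by
  have h : exp (-w) * exp (w / 2) = exp (-(w / 2)) := by rw [← exp_add]; ring_nf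
  calc (1 + w) * exp (-w) ≤ 2 * exp (w / 2) * exp (-w) := by
        gcongr; linarith [add_one_le_exp (w / 2)]
    _ = 2 * exp (-(w / 2)) := by rw [← h]; ring

lemma rpow_mul_exp_neg_mul_le {t u v : ℝ} (ht : 0 < t) (hu : 0 ≤ u) (hv0 : 0 ≤ v)
    (hv1 : v ≤ 1) : u ^ v * exp (-(t * u)) ≤ 2 * t ^ (-v) * exp (-(t * u / 2)) := by
  have hscale : u ^ v = t ^ (-v) * (t * u) ^ v := by
    rw [mul_rpow ht.le hu, rpow_neg ht.le, inv_mul_cancel_left₀ (rpow_pos_of_pos ht v).ne']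
  calc u ^ v * exp (-(t * u)) = t ^ (-v) * ((t * u) ^ v * exp (-(t * u))) := by
        rw [hscale]; ring
    _ ≤ t ^ (-v) * ((1 + t * u) * exp (-(t * u))) := by
        gcongr; exact rpow_le_one_add (by positivity) hv0 hv1
    _ ≤ t ^ (-v) * (2 * exp (-(t * u / 2))) :=
        mul_le_mul_of_nonneg_left (one_add_mul_exp_neg_le _) (by positivity)
    _ = 2 * t ^ (-v) * exp (-(t * u / 2)) := by ring

lemma integral_abs_mul_exp_neg_mul_sq_le {a : ℝ} (ha : 0 < a) {b : ℝ} (hb : 0 ≤ b) :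
    ∫ θ in -b..b, |θ| * exp (-(a * θ ^ 2)) ≤ 1 / a := by
  set f : ℝ → ℝ := fun θ ↦ |θ| * exp (-(a * θ ^ 2))
  have hf : Continuous f := by fun_prop
  have hderiv : ∀ θ, HasDerivAt (fun s ↦ -exp (-(a * s ^ 2)) / (2 * a))
      (θ * exp (-(a * θ ^ 2))) θ := by
    intro θ
    refine ((((hasDerivAt_pow 2 θ).const_mul a).neg.exp).neg.div_const (2 * a)).congr_deriv ?_
    simp only [Pi.neg_apply]
    field_simp
    norm_num
    ring
  have hright : ∫ θ in (0)..b, f θ = (1 - exp (-(a * b ^ 2))) / (2 * a) := by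
    have hcont : Continuous fun θ ↦ θ * exp (-(a * θ ^ 2)) := by fun_prop
    rw [intervalIntegral.integral_congr (g := fun θ ↦ θ * exp (-(a * θ ^ 2))) fun θ hθ ↦ by
        rw [Set.uIcc_of_le hb] at hθ; simp [f, abs_of_nonneg hθ.1],
      intervalIntegral.integral_eq_sub_of_hasDerivAt (fun θ _ ↦ hderiv θ)
        (hcont.intervalIntegrable _ _)]
    rw [zero_pow two_ne_zero, mul_zero, neg_zero, exp_zero]
    ring
  have hleft : ∫ θ in -b..0, f θ = ∫ θ in (0)..b, f θ := by
    simpa [f] using (intervalIntegral.integral_comp_neg (a := 0) (b := b) f).symm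
  rw [← intervalIntegral.integral_add_adjacent_intervals (hf.intervalIntegrable _ _)
    (hf.intervalIntegrable _ _), hleft, hright, ← add_div, ← two_mul, mul_div_mul_left _ _ two_ne_zero]
  gcongr
  linarith [exp_pos (-(a * b ^ 2))]

section phiFn

variable {m : ℕ} {r : ℕ → ℝ}

@[fun_prop]
lemma continuous_phiFn : Continuous (phiFn m r) := by
  unfold phiFn; fun_prop

lemma phiFn_nonneg (hr : ∀ k ∈ Icc 1 m, 0 ≤ r k) (θ : ℝ) : 0 ≤ phiFn m r θ :=
  sum_nonneg fun k hk ↦ mul_nonneg (hr k hk) (sub_nonneg.2 (cos_le_one _))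

lemma phiFn_le (hr : ∀ k ∈ Icc 1 m, 0 ≤ r k) (θ : ℝ) : phiFn m r θ ≤ 2 * ∑ k ∈ Icc 1 m, r k := by
  rw [mul_sum]
  exact sum_le_sum fun k hk ↦ by nlinarith [hr k hk, neg_one_le_cos (k * θ)]

lemma mul_sq_le_phiFn (hr : ∀ k ∈ Icc 1 m, 0 ≤ r k) (hm : 1 ≤ m) {θ : ℝ} (hθ : |θ| ≤ π) :
    2 / π ^ 2 * r 1 * θ ^ 2 ≤ phiFn m r θ := by
  have h1 : 1 ∈ Icc 1 m := mem_Icc.2 ⟨le_rfl, hm⟩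
  have hterm : r 1 * (1 - cos θ) ≤ phiFn m r θ := by
    simpa [phiFn] using single_le_sum (f := fun k : ℕ ↦ r k * (1 - cos (k * θ)))
      (fun k hk ↦ mul_nonneg (hr k hk) (sub_nonneg.2 (cos_le_one _))) h1
  nlinarith [cos_le_one_sub_mul_cos_sq hθ, hr 1 h1]

end phiFn

lemma norm_grad_sub_integrand (m : ℕ) (r : ℕ → ℝ) (t t' θ : ℝ) (x k : ℤ) :
    ‖(cexp (-((x + k : ℤ) : ℂ) * I * θ) - cexp (-(x : ℂ) * I * θ)) *
        (cexp (-(t' : ℂ) * (phiFn m r θ : ℂ)) - cexp (-(t : ℂ) * (phiFn m r θ : ℂ)))‖ =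
      ‖cexp (I * ((-(k * θ) : ℝ) : ℂ)) - 1‖ *
        |exp (-(t' * phiFn m r θ)) - exp (-(t * phiFn m r θ))| := by
  have hshift : cexp (-((x + k : ℤ) : ℂ) * I * θ) =
      cexp (-(x : ℂ) * I * θ) * cexp (I * ((-(k * θ) : ℝ) : ℂ)) := by
    rw [← Complex.exp_add]; push_cast; ring_nf
  have hunit : ‖cexp (-(x : ℂ) * I * θ)‖ = 1 := by
    rw [Complex.norm_exp]; simp
  have hreal : ∀ s : ℝ, cexp (-(s : ℂ) * (phiFn m r θ : ℂ)) =
      (exp (-(s * phiFn m r θ)) : ℂ) := fun s ↦ by push_cast; ring_nf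
  rw [hshift, ← mul_sub_one, hreal, hreal, ← Complex.ofReal_sub, norm_mul, norm_mul, hunit,
    one_mul, Complex.norm_real, Real.norm_eq_abs]

lemma abs_grad_hk_sub_le (m : ℕ) (r : ℕ → ℝ) (t t' : ℝ) (x k : ℤ) {g : ℝ → ℝ}
    (hg : IntervalIntegrable g volume (-π) π)
    (hbound : ∀ θ ∈ Set.Icc (-π) π, ‖cexp (I * ((-(k * θ) : ℝ) : ℂ)) - 1‖ *
        |exp (-(t' * phiFn m r θ)) - exp (-(t * phiFn m r θ))| ≤ g θ) :
    |(hk m r t' (x + k) - hk m r t' x) - (hk m r t (x + k) - hk m r t x)| ≤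
      (2 * π)⁻¹ * ∫ θ in -π..π, g θ := by
  have hπ : -π ≤ π := by linarith [pi_pos]
  set F : ℤ → ℝ → ℝ → ℂ := fun y s θ ↦
    cexp (-(y : ℂ) * I * θ) * cexp (-(s : ℂ) * (phiFn m r θ : ℂ))
  have hF : ∀ y s, IntervalIntegrable (F y s) volume (-π) π := fun y s ↦
    Continuous.intervalIntegrable (by fun_prop) _ _
  have hdiff : (hk m r t' (x + k) - hk m r t' x) - (hk m r t (x + k) - hk m r t x) =
      ((2 * (π : ℂ))⁻¹ * ∫ θ in -π..π,
        (cexp (-((x + k : ℤ) : ℂ) * I * θ) - cexp (-(x : ℂ) * I * θ)) *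
          (cexp (-(t' : ℂ) * (phiFn m r θ : ℂ)) -
            cexp (-(t : ℂ) * (phiFn m r θ : ℂ)))).re := by
    have hexpand : ∀ θ : ℝ, (cexp (-((x + k : ℤ) : ℂ) * I * θ) -
        cexp (-(x : ℂ) * I * θ)) * (cexp (-(t' : ℂ) * (phiFn m r θ : ℂ)) -
          cexp (-(t : ℂ) * (phiFn m r θ : ℂ))) =
        F (x + k) t' θ - F x t' θ - (F (x + k) t θ - F x t θ) := fun θ ↦ by simp only [F]; ring
    simp only [hexpand]
    rw [intervalIntegral.integral_sub (((hF _ _).sub (hF _ _))) ((hF _ _).sub (hF _ _)),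
      intervalIntegral.integral_sub (hF _ _) (hF _ _), intervalIntegral.integral_sub (hF _ _) (hF _ _)]
    simp only [hk, F, mul_sub, Complex.sub_re]
  have hnorm : ‖(2 * (π : ℂ))⁻¹‖ = (2 * π)⁻¹ := by
    rw [norm_inv, norm_mul, Complex.norm_real, Complex.norm_two, Real.norm_of_nonneg pi_pos.le]
  rw [hdiff]
  calc _ ≤ ‖(2 * (π : ℂ))⁻¹ * ∫ θ in -π..π, _‖ := Complex.abs_re_le_norm _
    _ ≤ _ := by
      rw [norm_mul, hnorm]
      gcongr
      refine (intervalIntegral.norm_integral_le_integral_norm hπ).trans ?_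
      refine intervalIntegral.integral_mono_on hπ (Continuous.intervalIntegrable (by fun_prop) _ _)
        hg fun θ hθ ↦ ?_
      rw [norm_grad_sub_integrand]
      exact hbound θ hθ

lemma abs_grad_hk_sub_le_of_nonneg {m : ℕ} {r : ℕ → ℝ} (hr : ∀ k ∈ Icc 1 m, 0 ≤ r k)
    {t t' v : ℝ} (ht : 0 ≤ t) (htt' : t ≤ t') (hv0 : 0 ≤ v) (hv1 : v ≤ 1) (x k : ℤ) :
    |(hk m r t' (x + k) - hk m r t' x) - (hk m r t (x + k) - hk m r t x)| ≤
      2 * (1 + 2 * ∑ k ∈ Icc 1 m, r k) * (t' - t) ^ v := by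
  set c := 2 * ((t' - t) ^ v * (1 + 2 * ∑ k ∈ Icc 1 m, r k))
  have hbound : ∀ θ ∈ Set.Icc (-π) π, ‖cexp (I * ((-(k * θ) : ℝ) : ℂ)) - 1‖ *
      |exp (-(t' * phiFn m r θ)) - exp (-(t * phiFn m r θ))| ≤ c := fun θ _ ↦ by
    have hφ := phiFn_nonneg hr θ
    have hexp : ‖cexp (I * ((-(k * θ) : ℝ) : ℂ)) - 1‖ ≤ 2 := by
      linarith [norm_sub_le (cexp (I * ((-(k * θ) : ℝ) : ℂ))) 1,
        Complex.norm_exp_I_mul_ofReal (-(k * θ)), norm_one (α := ℂ)]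
    calc _ ≤ 2 * (exp (-(t * phiFn m r θ)) * ((t' - t) ^ v * phiFn m r θ ^ v)) :=
          mul_le_mul hexp (abs_exp_neg_mul_sub_exp_neg_mul_le htt' hφ hv0 hv1) (abs_nonneg _)
            zero_le_two
      _ ≤ 2 * (1 * ((t' - t) ^ v * (1 + 2 * ∑ k ∈ Icc 1 m, r k))) := by
          gcongr
          · exact exp_le_one_iff.2 (neg_nonpos.2 (mul_nonneg ht hφ))
          · exact (rpow_le_one_add hφ hv0 hv1).trans (by linarith [phiFn_le hr θ])
      _ = c := by rw [one_mul]
  calc _ ≤ (2 * π)⁻¹ * ∫ _ in -π..π, c := abs_grad_hk_sub_le m r t t' x k intervalIntegrable_const hbound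
    _ = _ := by
      rw [intervalIntegral.integral_const, smul_eq_mul]
      field_simp [pi_pos.ne']
      ring

lemma abs_grad_hk_sub_le_of_pos {m : ℕ} (hm : 1 ≤ m) {r : ℕ → ℝ} (hr : ∀ k ∈ Icc 1 m, 0 ≤ r k)
    (hr1 : 0 < r 1) {t t' v : ℝ} (ht : 0 < t) (htt' : t ≤ t') (hv0 : 0 ≤ v) (hv1 : v ≤ 1)
    (x k : ℤ) :
    |(hk m r t' (x + k) - hk m r t' x) - (hk m r t (x + k) - hk m r t x)| ≤
      |(k : ℝ)| * π / r 1 * t ^ (-1 - v) * (t' - t) ^ v := by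
  set a := t * r 1 / π ^ 2
  have ha : 0 < a := by positivity
  set c := 2 * |(k : ℝ)| * (t' - t) ^ v * t ^ (-v)
  have hbound : ∀ θ ∈ Set.Icc (-π) π, ‖cexp (I * ((-(k * θ) : ℝ) : ℂ)) - 1‖ *
      |exp (-(t' * phiFn m r θ)) - exp (-(t * phiFn m r θ))| ≤
        c * (|θ| * exp (-(a * θ ^ 2))) := fun θ hθ ↦ by
    have hφ := phiFn_nonneg hr θ
    have hexp : ‖cexp (I * ((-(k * θ) : ℝ) : ℂ)) - 1‖ ≤ |(k : ℝ)| * |θ| := by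
      simpa [abs_mul] using Real.norm_exp_I_mul_ofReal_sub_one_le (x := -(k * θ))
    have hgauss : exp (-(t * phiFn m r θ / 2)) ≤ exp (-(a * θ ^ 2)) := by
      have := mul_sq_le_phiFn hr hm (abs_le.2 hθ)
      gcongr
      calc a * θ ^ 2 = t / 2 * (2 / π ^ 2 * r 1 * θ ^ 2) := by ring
        _ ≤ t / 2 * phiFn m r θ := by gcongr
        _ = _ := by ring
    calc _ ≤ |(k : ℝ)| * |θ| * (exp (-(t * phiFn m r θ)) * ((t' - t) ^ v * phiFn m r θ ^ v)) :=
          mul_le_mul hexp (abs_exp_neg_mul_sub_exp_neg_mul_le htt' hφ hv0 hv1) (abs_nonneg _)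
            (by positivity)
      _ = |(k : ℝ)| * |θ| * (t' - t) ^ v * (phiFn m r θ ^ v * exp (-(t * phiFn m r θ))) := by ring
      _ ≤ |(k : ℝ)| * |θ| * (t' - t) ^ v * (2 * t ^ (-v) * exp (-(a * θ ^ 2))) := by
          refine mul_le_mul_of_nonneg_left ((rpow_mul_exp_neg_mul_le ht hφ hv0 hv1).trans ?_)
            (by positivity)
          gcongr
      _ = c * (|θ| * exp (-(a * θ ^ 2))) := by ring
  calc _ ≤ (2 * π)⁻¹ * ∫ θ in -π..π, c * (|θ| * exp (-(a * θ ^ 2))) :=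
        abs_grad_hk_sub_le m r t t' x k (Continuous.intervalIntegrable (by fun_prop) _ _) hbound
    _ ≤ (2 * π)⁻¹ * (c * (1 / a)) := by
        rw [intervalIntegral.integral_const_mul]
        gcongr
        exact integral_abs_mul_exp_neg_mul_sq_le ha pi_pos.le
    _ = _ := by
        rw [show -1 - v = -1 + -v by ring, rpow_add ht, rpow_neg_one]
        simp only [a, c]
        field_simp

theorem stmt8 (m : ℕ) (hm : 1 ≤ m) (r : ℕ → ℝ) (hr : ∀ k ∈ Finset.Icc 1 m, 0 < r k) :
    ∃ C : ℝ, ∀ k : ℤ, |k| ≤ (m : ℤ) → ∀ v ∈ Set.Icc (0:ℝ) 1, ∀ t t' : ℝ, 0 ≤ t → t < t' →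
      ∀ x : ℤ,
        |(hk m r t' (x + k) - hk m r t' x) - (hk m r t (x + k) - hk m r t x)| ≤
          C * (if t = 0 then 1 else min 1 (t ^ (-1 - v))) * (t' - t) ^ v := by
  have hr0 : ∀ k ∈ Icc 1 m, 0 ≤ r k := fun k hk ↦ (hr k hk).le
  have hr1 : 0 < r 1 := hr 1 (mem_Icc.2 ⟨le_rfl, hm⟩)
  refine ⟨max (2 * (1 + 2 * ∑ k ∈ Icc 1 m, r k)) (m * π / r 1), ?_⟩
  rintro k hk v ⟨hv0, hv1⟩ t t' ht htt' x
  rcases le_or_gt t 1 with ht1 | ht1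
  · have hfactor : (if t = 0 then (1 : ℝ) else min 1 (t ^ (-1 - v))) = 1 := by
      split_ifs with ht0
      · rfl
      · exact min_eq_left (one_le_rpow_of_pos_of_le_one_of_nonpos
          (lt_of_le_of_ne ht (Ne.symm ht0)) ht1 (by linarith))
    rw [hfactor, mul_one]
    refine (abs_grad_hk_sub_le_of_nonneg hr0 ht htt'.le hv0 hv1 x k).trans ?_
    gcongr
    exact le_max_left _ _
  · have hfactor : (if t = 0 then (1 : ℝ) else min 1 (t ^ (-1 - v))) = t ^ (-1 - v) := by
      rw [if_neg (by linarith), min_eq_right (rpow_le_one_of_one_le_of_nonpos ht1.le (by linarith))]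
    have hkm : |(k : ℝ)| ≤ m := by exact_mod_cast hk
    rw [hfactor]
    refine (abs_grad_hk_sub_le_of_pos hm hr0 hr1 (by linarith) htt'.le hv0 hv1 x k).trans ?_
    gcongr
    exact (div_le_div_of_nonneg_right (by gcongr) hr1.le).trans (le_max_right _ _)
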